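/- Let 𝔄 be a C*-algebra, α an action of a compact abelian group G on 𝔄 and φ a pure state on the fixed point algebra 𝔄^α. Then for every γ ∈ Ĝ with P_γ ≠ 0 the representation ρ_γ of 𝔄^α is irreducible. -/

import Mathlib

open scoped ComplexOrder

/-- A state on a C*-algebra: a positive linear functional of norm one. -/
def IsState {A : Type*} [CStarAlgebra A] (φ : A →L[ℂ] ℂ) : Prop :=
  (∀ x : A, 0 ≤ φ (star x * x)) ∧ ‖φ‖ = 1

/-- The fixed point algebra `𝔄^α` of an action, as a star subalgebra. -/
def fixedAlg {G : Type*} [CommGroup G] {A : Type*} [CStarAlgebra A]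
    (α : G → A ≃⋆ₐ[ℂ] A) : StarSubalgebra ℂ A where
  carrier := {x | ∀ g, α g x = x}
  mul_mem' {x y} hx hy := fun g => by rw [map_mul, hx g, hy g]
  add_mem' {x y} hx hy := fun g => by rw [map_add, hx g, hy g]
  algebraMap_mem' c := fun g => by
    rw [Algebra.algebraMap_eq_smul_one, _root_.map_smul, map_one]
  star_mem' {x} hx := fun g => by rw [map_star, hx g]

/-- The spectral subspace `𝔄^α(γ)` of a character `γ` of `G`. -/
def specSet {G : Type*} [CommGroup G] [TopologicalSpace G] {A : Type*} [CStarAlgebra A]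
    (α : G → A ≃⋆ₐ[ℂ] A) (γ : ContinuousMonoidHom G Circle) : Set A :=
  {x | ∀ g, α g x = ((γ g : ℂ)) • x}

/-- The restriction of the state `ω` to the fixed point algebra is a pure state there.
(Every state of `𝔄^α` arises as such a restriction, and conversely; purity is expressed via
convex decompositions by states of `A`, using Hahn–Banach extension.) -/
def IsPureOnFixed {G : Type*} [CommGroup G] {A : Type*} [CStarAlgebra A]
    (α : G → A ≃⋆ₐ[ℂ] A) (ω : A →L[ℂ] ℂ) : Prop :=
  ∀ (ψ₁ ψ₂ : A →L[ℂ] ℂ) (t : ℝ), IsState ψ₁ → IsState ψ₂ → 0 < t → t < 1 →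
    (∀ a ∈ fixedAlg α, ω a = (t • ψ₁ + (1 - t) • ψ₂) a) →
    ∀ a ∈ fixedAlg α, ψ₁ a = ω a ∧ ψ₂ a = ω a

/-- The covariant GNS representation of an `α`-invariant state `ω`: cyclic representation
implementing `ω` as vector state, together with the canonical unitary implementation of the
group fixing the cyclic vector.  By uniqueness of the GNS construction this is *the* GNS
triple `(H, π, Ω)` of `ω`. -/
structure CovariantGNSRep (G : Type*) [CommGroup G] (A : Type*) [CStarAlgebra A]
    (α : G → A ≃⋆ₐ[ℂ] A) (H : Type*) [NormedAddCommGroup H] [InnerProductSpace ℂ H]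
    [CompleteSpace H] (ω : A →L[ℂ] ℂ) where
  π : A →⋆ₐ[ℂ] (H →L[ℂ] H)
  Ω : H
  U : G → (H →L[ℂ] H)
  cyclic : (Submodule.span ℂ (Set.range fun a => π a Ω)).topologicalClosure = ⊤
  vector_state : ∀ a, ω a = (inner ℂ Ω (π a Ω) : ℂ)
  U_unitary : ∀ g, U g ∈ unitary (H →L[ℂ] H)
  U_mul : ∀ g h, U (g * h) = U g * U h
  U_fix : ∀ g, U g Ω = Ω
  covariant : ∀ g x, U g * π x * star (U g) = π (α g x)

/-- The closed subspace `P_γ H = [π(𝔄^α(γ))Ω]`. -/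
def specSpan {G : Type*} [CommGroup G] [TopologicalSpace G] {A : Type*} [CStarAlgebra A]
    {α : G → A ≃⋆ₐ[ℂ] A} {H : Type*} [NormedAddCommGroup H] [InnerProductSpace ℂ H]
    [CompleteSpace H] {ω : A →L[ℂ] ℂ} (R : CovariantGNSRep G A α H ω)
    (γ : ContinuousMonoidHom G Circle) : Submodule ℂ H :=
  (Submodule.span ℂ {v : H | ∃ x ∈ specSet α γ, v = R.π x R.Ω}).topologicalClosure

/-- Irreducibility of the subrepresentation `ρ_γ` of `𝔄^α` on `P_γ H`. -/
def SubrepIrred {G : Type*} [CommGroup G] [TopologicalSpace G] {A : Type*} [CStarAlgebra A]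
    {α : G → A ≃⋆ₐ[ℂ] A} {H : Type*} [NormedAddCommGroup H] [InnerProductSpace ℂ H]
    [CompleteSpace H] {ω : A →L[ℂ] ℂ} (R : CovariantGNSRep G A α H ω)
    (γ : ContinuousMonoidHom G Circle) : Prop :=
  ∀ L : Submodule ℂ H, IsClosed (L : Set H) → L ≤ specSpan R γ →
    (∀ a ∈ fixedAlg α, ∀ v ∈ L, R.π a v ∈ L) → L = ⊥ ∨ L = specSpan R γ

/-! Let `L ⊆ [π(𝔄^α(γ))Ω]` be a nonzero closed `𝔄^α`-invariant subspace and `0 ≠ ξ ∈ L`. Some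
`η = π(x*)ξ` with `x ∈ 𝔄^α(γ)` is nonzero, and it lies in `[π(𝔄^α)Ω]` because
`x*𝔄^α(γ) ⊆ 𝔄^α`. Purity makes `𝔄^α` act irreducibly on `[π(𝔄^α)Ω]`: splitting `Ω = ξ₁ + ξ₂`
along an invariant subspace and its complement splits the vector state of `Ω` into a convex
combination of vector states, so `ξ₁` is a multiple of `Ω`. Hence `Ω ∈ [π(𝔄^α)η]`, and for
`y ∈ 𝔄^α(γ)` the vector `π(y)Ω` lies in the closure of `π(y𝔄^αx*)ξ ⊆ π(𝔄^α)L ⊆ L`. -/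

open scoped InnerProductSpace
open Submodule

lemma IsState.nontrivial {A : Type*} [CStarAlgebra A] {ω : A →L[ℂ] ℂ} (hω : IsState ω) :
    Nontrivial A := by
  by_contra h
  rw [not_nontrivial_iff_subsingleton] at h
  have : ω = 0 := ContinuousLinearMap.ext fun a => by rw [Subsingleton.elim a 0, map_zero]; rfl
  simpa [this] using hω.2

/-- `IsPureOnFixed α` with `fixedAlg α` replaced by an arbitrary star subalgebra. -/
def IsPureOn {A : Type*} [CStarAlgebra A] (S : StarSubalgebra ℂ A) (ω : A →L[ℂ] ℂ) : Prop :=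
  ∀ (ψ₁ ψ₂ : A →L[ℂ] ℂ) (t : ℝ), IsState ψ₁ → IsState ψ₂ → 0 < t → t < 1 →
    (∀ a ∈ S, ω a = (t • ψ₁ + (1 - t) • ψ₂) a) → ∀ a ∈ S, ψ₁ a = ω a ∧ ψ₂ a = ω a

section Spectral

variable {G : Type*} [CommGroup G] [TopologicalSpace G] {A : Type*} [CStarAlgebra A]
  {α : G → A ≃⋆ₐ[ℂ] A} {γ : ContinuousMonoidHom G Circle} {x y a : A}

lemma Circle.star_coe_mul_self (z : Circle) : star (z : ℂ) * z = 1 := by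
  rw [Complex.star_def, Complex.conj_mul', Circle.norm_coe]; norm_num

lemma mul_mem_specSet (hx : x ∈ specSet α γ) (ha : a ∈ fixedAlg α) : x * a ∈ specSet α γ :=
  fun g => by rw [map_mul, hx g, ha g, smul_mul_assoc]

lemma star_mul_mem_fixedAlg (hx : x ∈ specSet α γ) (hy : y ∈ specSet α γ) :
    star x * y ∈ fixedAlg α := fun g => by
  rw [map_mul, map_star, hx g, hy g, star_smul, smul_mul_smul_comm,
    Circle.star_coe_mul_self, one_smul]

lemma mul_star_mem_fixedAlg (hx : x ∈ specSet α γ) (hy : y ∈ specSet α γ) :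
    x * star y ∈ fixedAlg α := fun g => by
  rw [map_mul, map_star, hx g, hy g, star_smul, smul_mul_smul_comm, mul_comm,
    Circle.star_coe_mul_self, one_smul]

end Spectral

section VectorState

variable {A : Type*} [CStarAlgebra A] {H : Type*} [NormedAddCommGroup H] [InnerProductSpace ℂ H]
  [CompleteSpace H] (π : A →⋆ₐ[ℂ] (H →L[ℂ] H))

lemma inner_map_apply_eq_inner_map_star (a : A) (u w : H) :
    ⟪u, π a w⟫_ℂ = ⟪π (star a) u, w⟫_ℂ := by
  rw [map_star, ContinuousLinearMap.star_eq_adjoint, ContinuousLinearMap.adjoint_inner_left]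

lemma norm_inner_map_apply_le (u : H) (a : A) : ‖⟪u, π a u⟫_ℂ‖ ≤ ‖u‖ ^ 2 * ‖a‖ :=
  calc ‖⟪u, π a u⟫_ℂ‖ ≤ ‖u‖ * (‖π a‖ * ‖u‖) :=
        (norm_inner_le_norm _ _).trans (by gcongr; exact (π a).le_opNorm u)
    _ ≤ ‖u‖ * (‖a‖ * ‖u‖) := by gcongr; exact NonUnitalStarAlgHom.norm_apply_le π a
    _ = ‖u‖ ^ 2 * ‖a‖ := by ring

noncomputable def vecState (u : H) : A →L[ℂ] ℂ :=
  LinearMap.mkContinuous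
    { toFun := fun a => ⟪u, π a u⟫_ℂ
      map_add' := fun a b => by simp
      map_smul' := fun c a => by simp }
    (‖u‖ ^ 2) (norm_inner_map_apply_le π u)

variable {π}

@[simp]
lemma vecState_apply (u : H) (a : A) : vecState π u a = ⟪u, π a u⟫_ℂ := rfl

lemma vecState_one (u : H) : vecState π u 1 = (‖u‖ ^ 2 : ℝ) := by
  simp [inner_self_eq_norm_sq_to_K]

lemma vecState_smul (c : ℂ) (u : H) (a : A) :
    vecState π (c • u) a = (‖c‖ ^ 2 : ℝ) * vecState π u a := by
  simp only [vecState_apply, map_smul, inner_smul_left, inner_smul_right]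
  rw [mul_left_comm, ← mul_assoc, Complex.conj_mul']
  push_cast; rfl

lemma norm_vecState [Nontrivial A] (u : H) : ‖vecState π u‖ = ‖u‖ ^ 2 := by
  refine le_antisymm (ContinuousLinearMap.opNorm_le_bound _ (by positivity)
    (norm_inner_map_apply_le π u)) ?_
  simpa [vecState_one] using (vecState π u).le_opNorm 1

lemma isState_vecState [Nontrivial A] {u : H} (hu : ‖u‖ = 1) : IsState (vecState π u) := by
  refine ⟨fun a => ?_, by rw [norm_vecState, hu, one_pow]⟩
  rw [vecState_apply, map_mul, mul_apply_eq_comp, inner_map_apply_eq_inner_map_star,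
    star_star, inner_self_eq_norm_sq_to_K]
  positivity

end VectorState

section OrbitSpan

variable {A : Type*} [CStarAlgebra A] {H : Type*} [NormedAddCommGroup H] [InnerProductSpace ℂ H]
  [CompleteSpace H] (π : A →⋆ₐ[ℂ] (H →L[ℂ] H))

/-- The closed subspace `[π(s)v]`. -/
def orbitSpan (s : Set A) (v : H) : Submodule ℂ H :=
  (span ℂ {w | ∃ a ∈ s, w = π a v}).topologicalClosure

variable {π} {s : Set A} {v w : H} {a : A}

lemma isClosed_orbitSpan (s : Set A) (v : H) : IsClosed (orbitSpan π s v : Set H) :=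
  isClosed_topologicalClosure _

lemma apply_mem_orbitSpan (ha : a ∈ s) : π a v ∈ orbitSpan π s v :=
  le_topologicalClosure _ (subset_span ⟨a, ha, rfl⟩)

lemma self_mem_orbitSpan (S : StarSubalgebra ℂ A) (v : H) : v ∈ orbitSpan π S v := by
  simpa using apply_mem_orbitSpan (π := π) (v := v) (one_mem S)

lemma orbitSpan_le {M : Submodule ℂ H} (hM : IsClosed (M : Set H)) (h : ∀ a ∈ s, π a v ∈ M) :
    orbitSpan π s v ≤ M :=
  topologicalClosure_minimal _ (span_le.2 fun _ ⟨a, ha, hw⟩ => hw ▸ h a ha) hM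

lemma orbitSpan_le_comap {M : Submodule ℂ H} (hM : IsClosed (M : Set H)) (T : H →L[ℂ] H)
    (h : ∀ a ∈ s, T (π a v) ∈ M) : orbitSpan π s v ≤ M.comap (T : H →ₗ[ℂ] H) :=
  orbitSpan_le (hM.preimage T.continuous) h

lemma orbitSpan_le_of_mem {S : StarSubalgebra ℂ A} {M : Submodule ℂ H}
    (hM : IsClosed (M : Set H)) (hinv : ∀ a ∈ S, ∀ w ∈ M, π a w ∈ M) (hv : v ∈ M) :
    orbitSpan π S v ≤ M :=
  orbitSpan_le hM fun a ha => hinv a ha v hv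

lemma apply_mem_orbitSpan_of_mem {S : StarSubalgebra ℂ A} (ha : a ∈ S)
    (hw : w ∈ orbitSpan π S v) : π a w ∈ orbitSpan π S v :=
  orbitSpan_le_comap (isClosed_orbitSpan _ _) (π a)
    (fun b hb => by rw [← mul_apply_eq_comp, ← map_mul]; exact apply_mem_orbitSpan (mul_mem ha hb))
    hw

lemma eq_zero_of_mem_orbitSpan (hw : w ∈ orbitSpan π s v) (h : ∀ a ∈ s, ⟪π a v, w⟫_ℂ = 0) :
    w = 0 := by
  have : orbitSpan π s v ≤ (ℂ ∙ w)ᗮ := orbitSpan_le (isClosed_orthogonal _)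
    fun a ha => mem_orthogonal_singleton_iff_inner_left.2 (h a ha)
  exact inner_self_eq_zero.1 (mem_orthogonal_singleton_iff_inner_left.1 (this hw))

lemma exists_apply_star_ne_zero (hw : w ∈ orbitSpan π s v) (hw0 : w ≠ 0) :
    ∃ x ∈ s, π (star x) w ≠ 0 := by
  by_contra! h
  refine hw0 (eq_zero_of_mem_orbitSpan hw fun x hx => ?_)
  rw [← inner_conj_symm, inner_map_apply_eq_inner_map_star, h x hx, inner_zero_left, map_zero]

lemma apply_mem_orthogonal {S : StarSubalgebra ℂ A} {K : Submodule ℂ H}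
    (hK : ∀ a ∈ S, ∀ w ∈ K, π a w ∈ K) (ha : a ∈ S) (hw : w ∈ Kᗮ) : π a w ∈ Kᗮ :=
  (mem_orthogonal _ _).2 fun u hu => by
    rw [inner_map_apply_eq_inner_map_star]
    exact (mem_orthogonal _ _).1 hw _ (hK _ (star_mem ha) u hu)

end OrbitSpan

section Purity

variable {A : Type*} [CStarAlgebra A] {H : Type*} [NormedAddCommGroup H] [InnerProductSpace ℂ H]
  [CompleteSpace H] {π : A →⋆ₐ[ℂ] (H →L[ℂ] H)} {S : StarSubalgebra ℂ A}

lemma vecState_eq_norm_sq_mul {ξ : H} (hξ : ξ ≠ 0) (a : A) :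
    vecState π ξ a = (‖ξ‖ ^ 2 : ℝ) * vecState π ((‖ξ‖⁻¹ : ℂ) • ξ) a := by
  have : ‖ξ‖ ≠ 0 := norm_ne_zero_iff.2 hξ
  rw [vecState_smul, ← mul_assoc, norm_inv, Complex.norm_real, norm_norm]
  push_cast
  field_simp

lemma IsPureOn.vecState_eq_mul [Nontrivial A] {Ω ξ₁ ξ₂ : H}
    (hpure : IsPureOn S (vecState π Ω)) (hΩ : ‖Ω‖ = 1) (h₁ : ξ₁ ≠ 0) (h₂ : ξ₂ ≠ 0)
    (hsplit : ∀ a ∈ S, vecState π Ω a = vecState π ξ₁ a + vecState π ξ₂ a) :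
    ∀ a ∈ S, vecState π ξ₁ a = (‖ξ₁‖ ^ 2 : ℝ) * vecState π Ω a := by
  have hnorm : ‖ξ₁‖ ^ 2 + ‖ξ₂‖ ^ 2 = 1 := by
    have := hsplit 1 (one_mem S)
    rw [vecState_one, vecState_one, vecState_one, hΩ, one_pow] at this
    exact_mod_cast this.symm
  have ht₀ : 0 < ‖ξ₁‖ ^ 2 := by positivity
  have ht₁ : ‖ξ₁‖ ^ 2 < 1 := by linarith [pow_pos (norm_pos_iff.2 h₂) 2]
  have hψ := hpure (vecState π ((‖ξ₁‖⁻¹ : ℂ) • ξ₁)) (vecState π ((‖ξ₂‖⁻¹ : ℂ) • ξ₂))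
    (‖ξ₁‖ ^ 2) (isState_vecState (norm_smul_inv_norm h₁))
    (isState_vecState (norm_smul_inv_norm h₂)) ht₀ ht₁ fun a ha => by
      rw [hsplit a ha, vecState_eq_norm_sq_mul h₁, vecState_eq_norm_sq_mul h₂, ← hnorm,
        add_sub_cancel_left, add_apply, smul_apply, smul_apply, Complex.real_smul,
        Complex.real_smul]
  intro a ha
  rw [vecState_eq_norm_sq_mul h₁]
  exact congrArg _ (hψ a ha).1

lemma eq_smul_of_inner_eq {Ω ξ : H} {c : ℂ} (hξ : ξ ∈ orbitSpan π S Ω)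
    (h : ∀ a ∈ S, ⟪π a Ω, ξ⟫_ℂ = c * ⟪π a Ω, Ω⟫_ℂ) : ξ = c • Ω := by
  refine sub_eq_zero.1 (eq_zero_of_mem_orbitSpan
    (sub_mem hξ (smul_mem _ _ (self_mem_orbitSpan S Ω))) fun a ha => ?_)
  rw [inner_sub_right, inner_smul_right, h a ha, sub_self]

lemma IsPureOn.eq_orbitSpan [Nontrivial A] {Ω : H} (hpure : IsPureOn S (vecState π Ω))
    (hΩ : ‖Ω‖ = 1) {K : Submodule ℂ H} (hKc : IsClosed (K : Set H))
    (hKinv : ∀ a ∈ S, ∀ w ∈ K, π a w ∈ K) (hKle : K ≤ orbitSpan π S Ω) (hK0 : K ≠ ⊥) :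
    K = orbitSpan π S Ω := by
  refine le_antisymm hKle (orbitSpan_le_of_mem hKc hKinv ?_)
  have : K.HasOrthogonalProjection := by
    have := hKc.completeSpace_coe
    infer_instance
  obtain ⟨ξ₁, hξ₁, ξ₂, hξ₂, hΩξ⟩ := K.exists_add_mem_mem_orthogonal Ω
  by_cases h₂ : ξ₂ = 0
  · rwa [hΩξ, h₂, add_zero]
  by_cases h₁ : ξ₁ = 0
  · have : orbitSpan π S Ω ≤ Kᗮ :=
      orbitSpan_le_of_mem (isClosed_orthogonal K) (fun a ha _ => apply_mem_orthogonal hKinv ha)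
        (by rwa [hΩξ, h₁, zero_add])
    exact absurd (eq_bot_iff.2 (K.inf_orthogonal_eq_bot ▸ le_inf le_rfl (hKle.trans this))) hK0
  have hcross : ∀ a ∈ S, ⟪ξ₁, π a ξ₂⟫_ℂ = 0 ∧ ⟪ξ₂, π a ξ₁⟫_ℂ = 0 := fun a ha =>
    ⟨inner_right_of_mem_orthogonal hξ₁ (apply_mem_orthogonal hKinv ha hξ₂),
      inner_left_of_mem_orthogonal (hKinv a ha ξ₁ hξ₁) hξ₂⟩
  have hsplit : ∀ a ∈ S, vecState π Ω a = vecState π ξ₁ a + vecState π ξ₂ a := by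
    intro a ha
    simp only [hΩξ, vecState_apply, map_add, inner_add_left, inner_add_right, (hcross a ha).1,
      (hcross a ha).2, add_zero, zero_add]
  have hprop := hpure.vecState_eq_mul hΩ h₁ h₂ hsplit
  set t : ℂ := ((‖ξ₁‖ ^ 2 : ℝ) : ℂ)
  have hξ₁Ω : ξ₁ = t • Ω := by
    refine eq_smul_of_inner_eq (hKle hξ₁) fun a ha => ?_
    calc ⟪π a Ω, ξ₁⟫_ℂ = ⟪Ω, π (star a) ξ₁⟫_ℂ := by
          rw [inner_map_apply_eq_inner_map_star, star_star]
      _ = vecState π ξ₁ (star a) := by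
          rw [hΩξ, inner_add_left, (hcross _ (star_mem ha)).2, add_zero, vecState_apply]
      _ = t * vecState π Ω (star a) := hprop _ (star_mem ha)
      _ = t * ⟪π a Ω, Ω⟫_ℂ := by
          rw [vecState_apply, inner_map_apply_eq_inner_map_star, star_star]
  have ht : t ≠ 0 := by
    simp only [t, ne_eq, Complex.ofReal_eq_zero, pow_eq_zero_iff two_ne_zero, norm_eq_zero]
    exact h₁
  rw [← inv_smul_smul₀ ht Ω, ← hξ₁Ω]
  exact K.smul_mem _ hξ₁

end Purity

theorem subrep_on_spectral_subspace_irreducible_general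
    {G : Type*} [CommGroup G] [TopologicalSpace G]
    {A : Type*} [CStarAlgebra A]
    (α : G → A ≃⋆ₐ[ℂ] A)
    (ω : A →L[ℂ] ℂ) (hω : IsState ω)
    (hpure : IsPureOnFixed α ω)
    {H : Type*} [NormedAddCommGroup H] [InnerProductSpace ℂ H] [CompleteSpace H]
    (R : CovariantGNSRep G A α H ω) :
    ∀ γ : ContinuousMonoidHom G Circle, specSpan R γ ≠ ⊥ → SubrepIrred R γ := by
  intro γ _ L hLc hLle hLinv
  have hωR : ω = vecState R.π R.Ω := ContinuousLinearMap.ext R.vector_state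
  have := hω.nontrivial
  have hΩ : ‖R.Ω‖ = 1 := by
    have hnorm := hω.2
    rwa [hωR, norm_vecState, pow_eq_one_iff_of_nonneg (norm_nonneg _) two_ne_zero] at hnorm
  refine (eq_or_ne L ⊥).imp_right fun hL0 => le_antisymm hLle ?_
  obtain ⟨ξ, hξL, hξ0⟩ := L.ne_bot_iff.1 hL0
  obtain ⟨x, hx, hη⟩ := exists_apply_star_ne_zero (hLle hξL) hξ0
  set η := R.π (star x) ξ
  have hηΩ : η ∈ orbitSpan R.π (fixedAlg α) R.Ω :=
    orbitSpan_le_comap (isClosed_orbitSpan _ _) _ (fun y hy => by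
      rw [← mul_apply_eq_comp, ← map_mul]
      exact apply_mem_orbitSpan (star_mul_mem_fixedAlg hx hy)) (hLle hξL)
  have hK : orbitSpan R.π (fixedAlg α) η = orbitSpan R.π (fixedAlg α) R.Ω :=
    (hωR ▸ hpure : IsPureOn (fixedAlg α) (vecState R.π R.Ω)).eq_orbitSpan hΩ
      (isClosed_orbitSpan _ _) (fun a ha _ => apply_mem_orbitSpan_of_mem ha)
      (orbitSpan_le_of_mem (isClosed_orbitSpan _ _)
        (fun a ha _ => apply_mem_orbitSpan_of_mem ha) hηΩ)
      ((Submodule.ne_bot_iff _).2 ⟨_, self_mem_orbitSpan _ _, hη⟩)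
  refine orbitSpan_le hLc fun y hy => ?_
  have : orbitSpan R.π (fixedAlg α) η ≤ L.comap (R.π y : H →ₗ[ℂ] H) :=
    orbitSpan_le_comap hLc _ fun a ha => by
      simp only [η, ← mul_apply_eq_comp, ← map_mul, ← mul_assoc]
      exact hLinv _ (mul_star_mem_fixedAlg (mul_mem_specSet hy ha) hx) ξ hξL
  exact this (hK ▸ self_mem_orbitSpan _ _)

/-- **Lemma 3.3**: if `φ` is a pure state of the fixed point algebra of an action of a compact
abelian group, then every nonzero subrepresentation `ρ_γ` of `𝔄^α` on `[π(𝔄^α(γ))Ω]` in the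
GNS representation of `φ ∘ E` is irreducible. -/
theorem subrep_on_spectral_subspace_irreducible
    {G : Type*} [CommGroup G] [TopologicalSpace G] [IsTopologicalGroup G] [CompactSpace G]
    [T2Space G]
    {A : Type*} [CStarAlgebra A]
    (α : G → A ≃⋆ₐ[ℂ] A)
    (hα1 : α 1 = StarAlgEquiv.refl ℂ A)
    (hαmul : ∀ g h, α (g * h) = (α h).trans (α g))
    (hcont : ∀ x : A, Continuous fun g => α g x)
    (ω : A →L[ℂ] ℂ) (hω : IsState ω) (hinv : ∀ g x, ω (α g x) = ω x)
    (hpure : IsPureOnFixed α ω)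
    {H : Type*} [NormedAddCommGroup H] [InnerProductSpace ℂ H] [CompleteSpace H]
    (R : CovariantGNSRep G A α H ω) :
    ∀ γ : ContinuousMonoidHom G Circle, specSpan R γ ≠ ⊥ → SubrepIrred R γ :=
  subrep_on_spectral_subspace_irreducible_general α ω hω hpure R
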